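/- Let β, α, μ₂, d₂ > 0, θ ∈ ℝ, c > 0. Suppose S, I : ℝ → ℝ with I differentiable, S(ξ) > 0 and I(ξ) > 0 for all ξ, and I satisfies cI'(ξ) = d₂𝔍[I](ξ) + βS(ξ)I(ξ)/(1 + αI(ξ)) − μ₂I(ξ) for all ξ ∈ ℝ. Set ν = (4d₂ + μ₂)/c and W(ξ) = e^{νξ}I(ξ). Then W'(ξ) > 0 for all ξ ∈ ℝ, i.e. W is strictly increasing; consequently, for every a ≥ 0 and ξ ∈ ℝ, I(ξ − a) ≤ e^{νa}I(ξ). -/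

import Mathlib

/-!
Adding `c ν I = (4 d₂ + μ₂) I` to the equation cancels its terms `-4 d₂ I` and `-μ₂ I`, so
`c (ν I + I') = d₂ (I(ξ ± sin θ) + I(ξ ± cos θ)) + β S I / (1 + α I) > 0`.
Hence `W' = e^{νξ} (ν I + I') > 0`, and comparing `W (ξ - a) ≤ W ξ` gives the bound on `I (ξ - a)`.
-/

/-- Discrete Laplacian in direction `θ`. -/
noncomputable def lap (θ : ℝ) (φ : ℝ → ℝ) (ξ : ℝ) : ℝ :=
  φ (ξ + Real.sin θ) + φ (ξ - Real.sin θ) + φ (ξ + Real.cos θ) + φ (ξ - Real.cos θ) - 4 * φ ξ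

open Real

theorem lap_add_four_mul_pos {φ : ℝ → ℝ} (hφ : ∀ x, 0 < φ x) (θ ξ : ℝ) :
    0 < lap θ φ ξ + 4 * φ ξ := by
  unfold lap
  linarith [hφ (ξ + sin θ), hφ (ξ - sin θ), hφ (ξ + cos θ), hφ (ξ - cos θ)]

theorem hasDerivAt_exp_mul_mul {f : ℝ → ℝ} {f' : ℝ} (ν : ℝ) {ξ : ℝ} (hf : HasDerivAt f f' ξ) :
    HasDerivAt (fun x => exp (ν * x) * f x) (exp (ν * ξ) * (ν * f ξ + f')) ξ := by
  have hexp : HasDerivAt (fun x => exp (ν * x)) (exp (ν * ξ) * ν) ξ := by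
    simpa using ((hasDerivAt_id ξ).const_mul ν).exp
  exact (hexp.mul hf).congr_deriv (by ring)

theorem mul_add_deriv_pos_of_travelingWave {β α μ₂ d₂ θ c : ℝ} (hβ : 0 < β) (hα : 0 ≤ α)
    (hd₂ : 0 ≤ d₂) (hc : 0 < c) {S I : ℝ → ℝ} {ξ : ℝ} (hS : 0 < S ξ) (hI : ∀ x, 0 < I x)
    (hIeq : c * deriv I ξ = d₂ * lap θ I ξ + β * S ξ * I ξ / (1 + α * I ξ) - μ₂ * I ξ) :
    0 < (4 * d₂ + μ₂) / c * I ξ + deriv I ξ := by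
  have hIξ := hI ξ
  have hsource : 0 < β * S ξ * I ξ / (1 + α * I ξ) := by positivity
  have hdiffusion : 0 ≤ d₂ * (lap θ I ξ + 4 * I ξ) :=
    mul_nonneg hd₂ (lap_add_four_mul_pos hI θ ξ).le
  have hscaled : c * ((4 * d₂ + μ₂) / c * I ξ + deriv I ξ) =
      d₂ * (lap θ I ξ + 4 * I ξ) + β * S ξ * I ξ / (1 + α * I ξ) := by
    rw [mul_add, ← mul_assoc, mul_div_cancel₀ _ hc.ne', hIeq]
    ring
  exact (mul_pos_iff_of_pos_left hc).mp (by linarith)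

theorem le_exp_mul_mul_of_monotone {f : ℝ → ℝ} {ν : ℝ} (h : Monotone fun x => exp (ν * x) * f x)
    {a : ℝ} (ha : 0 ≤ a) (ξ : ℝ) : f (ξ - a) ≤ exp (ν * a) * f ξ := by
  have hW : exp (ν * (ξ - a)) * f (ξ - a) ≤ exp (ν * ξ) * f ξ := h (sub_le_self ξ ha)
  have hsplit : exp (ν * ξ) = exp (ν * (ξ - a)) * exp (ν * a) := by
    rw [← exp_add]
    ring_nf
  rw [hsplit, mul_assoc] at hW
  exact le_of_mul_le_mul_left hW (exp_pos _)

theorem stmt_13_general (β α μ₂ d₂ θ c : ℝ)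
    (hβ : 0 < β) (hα : 0 < α) (hd₂ : 0 < d₂) (hc : 0 < c)
    (S I : ℝ → ℝ) (hIdiff : Differentiable ℝ I)
    (hSpos : ∀ ξ : ℝ, 0 < S ξ) (hIpos : ∀ ξ : ℝ, 0 < I ξ)
    (hIeq : ∀ ξ : ℝ, c * deriv I ξ =
      d₂ * lap θ I ξ + β * S ξ * I ξ / (1 + α * I ξ) - μ₂ * I ξ)
    (ν : ℝ) (hν : ν = (4 * d₂ + μ₂) / c)
    (W : ℝ → ℝ) (hW : ∀ ξ : ℝ, W ξ = Real.exp (ν * ξ) * I ξ) :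
    (∀ ξ : ℝ, 0 < deriv W ξ) ∧ StrictMono W ∧
      ∀ a : ℝ, 0 ≤ a → ∀ ξ : ℝ, I (ξ - a) ≤ Real.exp (ν * a) * I ξ := by
  obtain rfl : W = fun ξ => exp (ν * ξ) * I ξ := funext hW
  subst hν
  have hderiv : ∀ ξ, 0 < deriv (fun x => exp ((4 * d₂ + μ₂) / c * x) * I x) ξ := fun ξ => by
    rw [(hasDerivAt_exp_mul_mul _ (hIdiff ξ).hasDerivAt).deriv]
    exact mul_pos (exp_pos _) (mul_add_deriv_pos_of_travelingWave hβ hα.le hd₂.le hc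
      (hSpos ξ) hIpos (hIeq ξ))
  have hmono := strictMono_of_deriv_pos hderiv
  exact ⟨hderiv, hmono, fun a ha ξ => le_exp_mul_mul_of_monotone hmono.monotone ha ξ⟩

theorem stmt_13 (β α μ₂ d₂ θ c : ℝ)
    (hβ : 0 < β) (hα : 0 < α) (hμ₂ : 0 < μ₂) (hd₂ : 0 < d₂) (hc : 0 < c)
    (S I : ℝ → ℝ) (hIdiff : Differentiable ℝ I)
    (hSpos : ∀ ξ : ℝ, 0 < S ξ) (hIpos : ∀ ξ : ℝ, 0 < I ξ)
    (hIeq : ∀ ξ : ℝ, c * deriv I ξ =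
      d₂ * lap θ I ξ + β * S ξ * I ξ / (1 + α * I ξ) - μ₂ * I ξ)
    (ν : ℝ) (hν : ν = (4 * d₂ + μ₂) / c)
    (W : ℝ → ℝ) (hW : ∀ ξ : ℝ, W ξ = Real.exp (ν * ξ) * I ξ) :
    (∀ ξ : ℝ, 0 < deriv W ξ) ∧ StrictMono W ∧
      ∀ a : ℝ, 0 ≤ a → ∀ ξ : ℝ, I (ξ - a) ≤ Real.exp (ν * a) * I ξ :=
  stmt_13_general β α μ₂ d₂ θ c hβ hα hd₂ hc S I hIdiff hSpos hIpos hIeq ν hν W hW
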